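/- For every integer d ≥ 2 and all reals λ ≥ 0, r ∈ [0,1] with λ + r > 0: ∫_0^π sin^{d−2}(θ) · (λ² − 2rλ cos(θ) + r²)^{−(d−3)/2} dθ = 2^{d−1} · (λ+r)^{3−d} · S_{d−3}( 4λr / (λ+r)² ). -/

import Mathlib

open MeasureTheory Real

/-- The special function `S_s(z) = ∫₀¹ t^{s+1} (1-t²)^{s/2} (1-zt²)^{-s/2} dt`. -/
noncomputable def Sfun (s z : ℝ) : ℝ :=
  ∫ t in Set.Ioo (0 : ℝ) 1,
    t ^ (s + 1) * (1 - t ^ 2) ^ (s / 2) * (1 - z * t ^ 2) ^ (-(s / 2))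

/-!
Substituting `t = cos (θ/2)` in `S_{d-3}(z)` turns it into an integral over `(0, π)`.
With `s = sin (θ/2)`, `c = cos (θ/2)` the half-angle formulas give `sin θ = 2sc` and
`λ² - 2rλ cos θ + r² = (λ+r)² (1 - z c²)` for `z = 4λr/(λ+r)²`, after which the two
integrands agree pointwise up to the constant `2^{d-1} (λ+r)^{3-d}`.
-/

lemma image_cos_half_Ioo_zero_pi :
    (fun θ : ℝ => cos (θ / 2)) '' Set.Ioo 0 π = Set.Ioo 0 1 := by
  ext t
  constructor
  · rintro ⟨θ, ⟨hθ0, hθπ⟩, rfl⟩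
    refine ⟨cos_pos_of_mem_Ioo ⟨by linarith, by linarith⟩, ?_⟩
    simpa using cos_lt_cos_of_nonneg_of_le_pi le_rfl (by linarith) (by linarith : 0 < θ / 2)
  · rintro ⟨ht0, ht1⟩
    refine ⟨2 * arccos t, ⟨?_, ?_⟩, ?_⟩
    · linarith [arccos_pos.2 ht1]
    · linarith [arccos_lt_pi_div_two.2 ht0]
    · simp only [mul_div_cancel_left₀ _ (two_ne_zero (α := ℝ))]
      exact cos_arccos (by linarith) ht1.le

lemma integral_Ioo_zero_one_eq_integral_cos_half {E : Type*} [NormedAddCommGroup E]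
    [NormedSpace ℝ E] (f : ℝ → E) :
    ∫ t in Set.Ioo (0 : ℝ) 1, f t
      = ∫ θ in Set.Ioo 0 π, (sin (θ / 2) / 2) • f (cos (θ / 2)) := by
  have hderiv : ∀ θ ∈ Set.Ioo 0 π,
      HasDerivWithinAt (fun θ : ℝ => cos (θ / 2)) (-sin (θ / 2) / 2) (Set.Ioo 0 π) θ := by
    intro θ _
    exact (((hasDerivAt_id' θ).div_const 2).cos.congr_deriv (by ring)).hasDerivWithinAt
  have hinj : Set.InjOn (fun θ : ℝ => cos (θ / 2)) (Set.Ioo 0 π) := by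
    intro a ⟨ha0, haπ⟩ b ⟨hb0, hbπ⟩ hab
    have := injOn_cos ⟨by linarith, by linarith⟩ ⟨by linarith, by linarith⟩ hab
    linarith
  rw [← image_cos_half_Ioo_zero_pi,
    integral_image_eq_integral_abs_deriv_smul measurableSet_Ioo hderiv hinj]
  refine setIntegral_congr_fun measurableSet_Ioo fun θ ⟨hθ0, hθπ⟩ => ?_
  have hsin : 0 < sin (θ / 2) := sin_pos_of_pos_of_lt_pi (by linarith) (by linarith)
  rw [neg_div, abs_neg, abs_of_pos (half_pos hsin)]

lemma sq_sub_two_mul_mul_cos_add_sq {l r : ℝ} (hlr : l + r ≠ 0) (θ : ℝ) :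
    l ^ 2 - 2 * r * l * cos θ + r ^ 2
      = (l + r) ^ 2 * (1 - 4 * l * r / (l + r) ^ 2 * cos (θ / 2) ^ 2) := by
  rw [cos_sq, mul_div_cancel₀ θ two_ne_zero]
  field_simp
  ring

lemma four_mul_mul_div_add_sq_le_one (l r : ℝ) : 4 * l * r / (l + r) ^ 2 ≤ 1 := by
  rcases eq_or_ne (l + r) 0 with h | h
  · simp [h]
  · rw [div_le_one (by positivity)]
    nlinarith [sq_nonneg (l - r)]

/-- The pointwise form of the identity, for `s = sin (θ/2)`, `c = cos (θ/2)`, `a = λ + r`. -/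
lemma landen_integrand_eq {d : ℕ} (hd : 2 ≤ d) {s c a w : ℝ} (hs : 0 < s)
    (hsc : s ^ 2 + c ^ 2 = 1) (ha : 0 < a) (hw : 0 < w) :
    (2 * s * c) ^ (d - 2) * (a ^ 2 * w) ^ (-(((d : ℝ) - 3) / 2))
      = 2 ^ (d - 1) * a ^ (3 - (d : ℝ))
          * (s / 2 * (c ^ ((d : ℝ) - 3 + 1) * (1 - c ^ 2) ^ (((d : ℝ) - 3) / 2)
              * w ^ (-(((d : ℝ) - 3) / 2)))) := by
  have ha2 : (a ^ 2) ^ (-(((d : ℝ) - 3) / 2)) = a ^ (3 - (d : ℝ)) := by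
    rw [← rpow_natCast, ← rpow_mul ha.le]
    ring_nf
  have hs2 : (1 - c ^ 2) ^ (((d : ℝ) - 3) / 2) * s = s ^ ((d : ℝ) - 2) := by
    rw [← hsc, add_sub_cancel_right, ← rpow_natCast, ← rpow_mul hs.le, ← rpow_add_one hs.ne']
    ring_nf
  have hd2 : ((d - 2 : ℕ) : ℝ) = (d : ℝ) - 2 := by
    rw [Nat.cast_sub hd]
    norm_num
  have h2 : (2 : ℝ) ^ (d - 1) = 2 ^ (d - 2) * 2 := by
    rw [← pow_succ]
    congr 1
    omega
  rw [mul_rpow (by positivity) hw.le, ha2, mul_pow, mul_pow, ← rpow_natCast s, ← rpow_natCast c,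
    hd2, show (d : ℝ) - 3 + 1 = (d : ℝ) - 2 by ring, h2, ← hs2]
  field_simp

theorem landen_transform_lemma_general
    (d : ℕ) (hd : 2 ≤ d) (l r : ℝ)
    (hlr : 0 < l + r) :
    ∫ θ in Set.Ioo (0 : ℝ) Real.pi,
        Real.sin θ ^ (d - 2)
          * (l ^ 2 - 2 * r * l * Real.cos θ + r ^ 2) ^ (-(((d : ℝ) - 3) / 2))
      = 2 ^ (d - 1) * (l + r) ^ (3 - (d : ℝ))
          * Sfun ((d : ℝ) - 3) (4 * l * r / (l + r) ^ 2) := by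
  set z := 4 * l * r / (l + r) ^ 2
  rw [Sfun, integral_Ioo_zero_one_eq_integral_cos_half, ← integral_const_mul]
  refine setIntegral_congr_fun measurableSet_Ioo fun θ ⟨hθ0, hθπ⟩ => ?_
  have hs : 0 < sin (θ / 2) := sin_pos_of_pos_of_lt_pi (by linarith) (by linarith)
  have hc1 : cos (θ / 2) ^ 2 < 1 := by
    nlinarith [sin_sq_add_cos_sq (θ / 2)]
  have hw : 0 < 1 - z * cos (θ / 2) ^ 2 := by
    nlinarith [four_mul_mul_div_add_sq_le_one l r, sq_nonneg (cos (θ / 2))]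
  have hsin : sin θ = 2 * sin (θ / 2) * cos (θ / 2) := by
    rw [← sin_two_mul, mul_div_cancel₀ θ two_ne_zero]
  rw [hsin, sq_sub_two_mul_mul_cos_add_sq hlr.ne', smul_eq_mul]
  exact landen_integrand_eq hd hs (sin_sq_add_cos_sq _) hlr hw

/-- **Landen transform lemma.** For every integer `d ≥ 2`, `λ ≥ 0` and `r ∈ [0,1]` with
`λ + r > 0`,
`∫₀^π sin^{d-2}θ (λ² - 2rλcosθ + r²)^{-(d-3)/2} dθ = 2^{d-1} (λ+r)^{3-d} S_{d-3}(4λr/(λ+r)²)`. -/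
theorem landen_transform_lemma
    (d : ℕ) (hd : 2 ≤ d) (l r : ℝ) (hlpos : 0 ≤ l) (hr : r ∈ Set.Icc (0 : ℝ) 1)
    (hlr : 0 < l + r) :
    ∫ θ in Set.Ioo (0 : ℝ) Real.pi,
        Real.sin θ ^ (d - 2)
          * (l ^ 2 - 2 * r * l * Real.cos θ + r ^ 2) ^ (-(((d : ℝ) - 3) / 2))
      = 2 ^ (d - 1) * (l + r) ^ (3 - (d : ℝ))
          * Sfun ((d : ℝ) - 3) (4 * l * r / (l + r) ^ 2) :=
  landen_transform_lemma_general d hd l r hlr
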